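/- arXiv:1501.06088 — 3 statements merged into one kernel-verified Lean document; each statement's English description precedes it below -/
import Mathlib

section
/- Work in E = EuclideanSpace ℝ (Fin d). Let P₁, P₂ ⊆ E be convex sets, n ∈ E, c ∈ ℝ, such that P₁ ⊆ {x : ⟪x, n⟫ ≤ c}, P₂ ⊆ {x : ⟪x, n⟫ ≥ c}, and F := P₁ ∩ P₂ is nonempty. Let g₁ : E → ℝ be an affine map and let s > 0. Then there exists a unique affine map g₂ : E → ℝ such that (i) the linear part of g₂ equals the linear part of g₁ plus the linear functional x ↦ s·⟪x, n⟫, and (ii) g₂ agrees with g₁ on F; namely g₂(x) = g₁(x) + s·(⟪x, n⟫ − c). Moreover, for this g₂, the intersection of the graphs {(x, g₁(x)) : x ∈ P₁} ∩ {(x, g₂(x)) : x ∈ P₂} equals {(x, g₁(x)) : x ∈ F}. -/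
open scoped RealInnerProductSpace

/-- Lifting a cell to an already lifted neighbor (graph formulation).
If `P₁, P₂` are convex sets separated by the hyperplane `⟪·, n⟫ = c`, meeting
in the nonempty set `F = P₁ ∩ P₂`, `g₁` is an affine map (a lift of `P₁`) and
`s > 0`, then there is a unique affine map `g₂` whose linear part is that of
`g₁` plus `s·⟪·, n⟫` and which agrees with `g₁` on `F`; it is given by
`g₂ x = g₁ x + s·(⟪x, n⟫ − c)`, and the graphs of `g₁` over `P₁` and `g₂` over
`P₂` intersect exactly in the graph of `g₁` over `F`. -/
theorem lift_to_neighbor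
    {d : ℕ} (P₁ P₂ : Set (EuclideanSpace ℝ (Fin d)))
    (hP₁ : Convex ℝ P₁) (hP₂ : Convex ℝ P₂)
    (n : EuclideanSpace ℝ (Fin d)) (c : ℝ)
    (hP₁side : P₁ ⊆ {x | ⟪x, n⟫ ≤ c})
    (hP₂side : P₂ ⊆ {x | c ≤ ⟪x, n⟫})
    (F : Set (EuclideanSpace ℝ (Fin d))) (hF : F = P₁ ∩ P₂)
    (hFne : F.Nonempty)
    (g₁ : EuclideanSpace ℝ (Fin d) →ᵃ[ℝ] ℝ) (s : ℝ) (hs : 0 < s) :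
    (∃! g₂ : EuclideanSpace ℝ (Fin d) →ᵃ[ℝ] ℝ,
      (∀ x, g₂.linear x = g₁.linear x + s * ⟪x, n⟫) ∧ (∀ x ∈ F, g₂ x = g₁ x)) ∧
    (∀ g₂ : EuclideanSpace ℝ (Fin d) →ᵃ[ℝ] ℝ,
      ((∀ x, g₂.linear x = g₁.linear x + s * ⟪x, n⟫) ∧ (∀ x ∈ F, g₂ x = g₁ x)) →
      (∀ x, g₂ x = g₁ x + s * (⟪x, n⟫ - c)) ∧
      {p : EuclideanSpace ℝ (Fin d) × ℝ | p.1 ∈ P₁ ∧ p.2 = g₁ p.1} ∩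
          {p : EuclideanSpace ℝ (Fin d) × ℝ | p.1 ∈ P₂ ∧ p.2 = g₂ p.1} =
        {p : EuclideanSpace ℝ (Fin d) × ℝ | p.1 ∈ F ∧ p.2 = g₁ p.1}) := by
  obtain ⟨x₀, hx₀⟩ := hFne
  have hx₀c : ⟪x₀, n⟫ = c := by
    rw [hF] at hx₀
    exact le_antisymm (hP₁side hx₀.1) (hP₂side hx₀.2)
  -- every x in F lies on the hyperplane
  have hFc : ∀ x ∈ F, ⟪x, n⟫ = c := by
    intro x hx
    rw [hF] at hx
    exact le_antisymm (hP₁side hx.1) (hP₂side hx.2)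
  -- the candidate affine map
  set G : EuclideanSpace ℝ (Fin d) →ᵃ[ℝ] ℝ :=
    { toFun := fun x => g₁ x + s * (⟪x, n⟫ - c)
      linear := g₁.linear + s • ((innerSL ℝ n).toLinearMap)
      map_vadd' := by
        intro p v
        simp only [LinearMap.add_apply, LinearMap.smul_apply,
          ContinuousLinearMap.coe_coe, innerSL_apply_apply, vadd_eq_add]
        rw [show v + p = v +ᵥ p from rfl, g₁.map_vadd]
        simp only [vadd_eq_add, inner_add_left]
        rw [real_inner_comm n v, smul_eq_mul]
        ring } with hG
  have hGlin : ∀ x, G.linear x = g₁.linear x + s * ⟪x, n⟫ := by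
    intro x
    simp [hG, real_inner_comm n x]
  have hGF : ∀ x ∈ F, G x = g₁ x := by
    intro x hx
    show g₁ x + s * (⟪x, n⟫ - c) = g₁ x
    rw [hFc x hx]; ring
  -- any g₂ with the two properties equals G
  have key : ∀ g₂ : EuclideanSpace ℝ (Fin d) →ᵃ[ℝ] ℝ,
      ((∀ x, g₂.linear x = g₁.linear x + s * ⟪x, n⟫) ∧ (∀ x ∈ F, g₂ x = g₁ x)) →
      ∀ x, g₂ x = g₁ x + s * (⟪x, n⟫ - c) := by
    intro g₂ ⟨hl, ha⟩ x
    have h1 : g₂ x = g₂.linear (x - x₀) + g₂ x₀ := by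
      rw [show x = (x - x₀) +ᵥ x₀ by simp, g₂.map_vadd]; simp
    have h2 : g₁ x = g₁.linear (x - x₀) + g₁ x₀ := by
      rw [show x = (x - x₀) +ᵥ x₀ by simp, g₁.map_vadd]; simp
    rw [h1, hl, ha x₀ hx₀, inner_sub_left, h2, hx₀c]
    ring
  have heq : ∀ g₂ : EuclideanSpace ℝ (Fin d) →ᵃ[ℝ] ℝ,
      ((∀ x, g₂.linear x = g₁.linear x + s * ⟪x, n⟫) ∧ (∀ x ∈ F, g₂ x = g₁ x)) →
      g₂ = G := by
    intro g₂ h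
    apply AffineMap.ext_linear (p := x₀)
    · ext x
      rw [h.1 x, hGlin x]
    · rw [h.2 x₀ hx₀, hGF x₀ hx₀]
  constructor
  · exact ⟨G, ⟨hGlin, hGF⟩, heq⟩
  · intro g₂ h
    refine ⟨key g₂ h, ?_⟩
    ext ⟨x, t⟩
    simp only [Set.mem_inter_iff, Set.mem_setOf_eq]
    constructor
    · rintro ⟨⟨h1, h2⟩, ⟨h3, _⟩⟩
      exact ⟨by rw [hF]; exact ⟨h1, h3⟩, h2⟩
    · rintro ⟨hxF, ht⟩
      have hx' := hxF; rw [hF] at hx'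
      exact ⟨⟨hx'.1, ht⟩, ⟨hx'.2, by rw [ht, h.2 x hxF]⟩⟩
end

section
/- Let P and M be real d × k matrices such that Pᵀ · M = Mᵀ · P, the rank of P equals d, and the rank of M equals d. Then there exists a unique matrix Q : Matrix (Fin d) (Fin d) ℝ such that Q is symmetric (Qᵀ = Q), Q is invertible, and M = Q · P. -/
/-!
If `B` is a right inverse of `P` (it exists since `P` has full row rank), the only candidate
is `Q = M * B`, because `Q * P = M` forces `Q = Q * P * B = M * B`. Sandwiching the hypothesis
`Pᵀ * M = Mᵀ * P` between `Bᵀ` and `B` shows that `M * B` is symmetric, and then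
`M * B * P = (M * B)ᵀ * P = Bᵀ * Pᵀ * M = M`. Finally `Q * (P * S) = M * S = 1` for a right
inverse `S` of `M`, so `Q` is invertible.
-/

open Matrix

namespace Matrix

theorem exists_mul_eq_one_of_rank_eq_card_height {K m n : Type*} [Field K] [Fintype m]
    [Fintype n] [DecidableEq m] {A : Matrix m n K} (h : A.rank = Fintype.card m) :
    ∃ B : Matrix n m K, A * B = 1 := by
  classical
  have hrange : LinearMap.range A.mulVecLin = ⊤ :=
    Submodule.eq_top_of_finrank_eq (by rw [← Matrix.rank, h, Module.finrank_fintype_fun_eq_card])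
  obtain ⟨g, hg⟩ := A.mulVecLin.exists_rightInverse_of_surjective hrange
  refine ⟨LinearMap.toMatrix' g, ?_⟩
  rw [← LinearMap.toMatrix'_toLin' A, ← LinearMap.toMatrix'_comp, Matrix.toLin'_apply', hg,
    LinearMap.toMatrix'_id]

variable {α m n : Type*} [CommRing α] [Fintype m] [Fintype n] [DecidableEq m]
  {P M : Matrix m n α} {B : Matrix n m α}

theorem isSymm_mul_of_transpose_mul_comm (hsym : Pᵀ * M = Mᵀ * P) (hB : P * B = 1) :
    (M * B).IsSymm :=
  calc (M * B)ᵀ = Bᵀ * (Mᵀ * P) * B := by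
        rw [transpose_mul, Matrix.mul_assoc, Matrix.mul_assoc, hB, Matrix.mul_one]
    _ = (P * B)ᵀ * M * B := by
        rw [← hsym, transpose_mul]; simp only [Matrix.mul_assoc]
    _ = M * B := by rw [hB, transpose_one, Matrix.one_mul]

theorem mul_mul_eq_of_transpose_mul_comm (hsym : Pᵀ * M = Mᵀ * P) (hB : P * B = 1) :
    M * B * P = M :=
  calc M * B * P = (M * B)ᵀ * P := by rw [(isSymm_mul_of_transpose_mul_comm hsym hB).eq]
    _ = (P * B)ᵀ * M := by
        rw [transpose_mul, transpose_mul, Matrix.mul_assoc, Matrix.mul_assoc, hsym]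
    _ = M := by rw [hB, transpose_one, Matrix.one_mul]

end Matrix

/-- If `P` and `M` are real `d × k` matrices of rank `d` with `Pᵀ·M = Mᵀ·P`,
then there is a unique symmetric invertible `d × d` matrix `Q` with
`M = Q·P`. -/
theorem exists_unique_symmetric_matrix
    {d k : ℕ} (P M : Matrix (Fin d) (Fin k) ℝ)
    (hsym : Pᵀ * M = Mᵀ * P)
    (hrankP : P.rank = d) (hrankM : M.rank = d) :
    ∃! Q : Matrix (Fin d) (Fin d) ℝ, Qᵀ = Q ∧ IsUnit Q ∧ M = Q * P := by
  obtain ⟨B, hB⟩ := exists_mul_eq_one_of_rank_eq_card_height (A := P) (by simpa using hrankP)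
  obtain ⟨S, hS⟩ := exists_mul_eq_one_of_rank_eq_card_height (A := M) (by simpa using hrankM)
  have hQP : M * B * P = M := mul_mul_eq_of_transpose_mul_comm hsym hB
  have hQunit : IsUnit (M * B) :=
    IsUnit.of_mul_eq_one (P * S) (by rw [← Matrix.mul_assoc, hQP, hS])
  refine ⟨M * B, ⟨isSymm_mul_of_transpose_mul_comm hsym hB, hQunit, hQP.symm⟩, ?_⟩
  rintro Q ⟨-, -, rfl⟩
  rw [Matrix.mul_assoc, hB, Matrix.mul_one]
end

section
/- Let Q : Matrix (Fin d) (Fin d) ℝ be a symmetric invertible matrix and let b : Basis (Fin d) ℝ (EuclideanSpace ℝ (Fin d)) be a basis. Suppose that for every integer vector z : Fin d → ℤ the quadratic form value (∑ᵢ zᵢ • b i)ᵀ · Q · (∑ᵢ zᵢ • b i) is nonnegative. Then Q is positive definite. -/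
/-!
A quadratic form is homogeneous of degree two, so nonnegativity on the lattice `Λ` spanned by `b`
passes to every rescaled lattice `n⁻¹ Λ`. These approximate every point of the space (the lattice
floor of `n • x` lies within `∑ ‖b i‖` of `n • x`), so by continuity the form is positive
semidefinite, and an invertible positive semidefinite matrix is positive definite.
-/

open Matrix Filter Topology Submodule

section

variable {ι E : Type*} [Fintype ι] [NormedAddCommGroup E] [NormedSpace ℝ E]
  (b : Module.Basis ι ℝ E)

theorem ZSpan.tendsto_inv_smul_floor_smul (x : E) :
    Tendsto (fun n : ℕ => (n : ℝ)⁻¹ • (ZSpan.floor b ((n : ℝ) • x) : E)) atTop (𝓝 x) := by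
  have hdist : ∀ᶠ n : ℕ in atTop,
      ‖(n : ℝ)⁻¹ • (ZSpan.floor b ((n : ℝ) • x) : E) - x‖ ≤ (n : ℝ)⁻¹ * ∑ i, ‖b i‖ := by
    filter_upwards [eventually_ne_atTop 0] with n hn
    have hn' : (n : ℝ) ≠ 0 := Nat.cast_ne_zero.mpr hn
    calc ‖(n : ℝ)⁻¹ • (ZSpan.floor b ((n : ℝ) • x) : E) - x‖
        = ‖(n : ℝ)⁻¹ • ZSpan.fract b ((n : ℝ) • x)‖ := by
          rw [ZSpan.fract_apply, smul_sub, inv_smul_smul₀ hn', ← norm_neg, neg_sub]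
      _ ≤ (n : ℝ)⁻¹ * ∑ i, ‖b i‖ := by
          rw [norm_smul, Real.norm_of_nonneg (by positivity)]
          exact mul_le_mul_of_nonneg_left (ZSpan.norm_fract_le b _) (by positivity)
  rw [tendsto_iff_norm_sub_tendsto_zero]
  refine squeeze_zero' (Eventually.of_forall fun _ => norm_nonneg _) hdist ?_
  simpa using tendsto_inv_atTop_nhds_zero_nat.mul_const (∑ i, ‖b i‖)

theorem nonneg_of_nonneg_on_span_int {f : E → ℝ} (hf : Continuous f)
    (hhom : ∀ (t : ℝ) (x : E), f (t • x) = t ^ 2 * f x)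
    (hlat : ∀ v ∈ span ℤ (Set.range b), 0 ≤ f v) (x : E) : 0 ≤ f x := by
  refine ge_of_tendsto ((hf.tendsto x).comp (ZSpan.tendsto_inv_smul_floor_smul b x))
    (Eventually.of_forall fun n => ?_)
  simp only [Function.comp_apply, hhom]
  exact mul_nonneg (sq_nonneg _) (hlat _ (ZSpan.floor b _).2)

end

/-- If a symmetric invertible matrix `Q` has nonnegative associated quadratic
form on every point of the full-rank lattice generated by a basis `b` of
`ℝ^d`, then `Q` is positive definite. -/
theorem posDef_of_nonneg_on_lattice
    {d : ℕ} (Q : Matrix (Fin d) (Fin d) ℝ)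
    (hQsym : Qᵀ = Q) (hQunit : IsUnit Q)
    (b : Module.Basis (Fin d) ℝ (EuclideanSpace ℝ (Fin d)))
    (hnonneg : ∀ z : Fin d → ℤ,
      0 ≤ (fun i => (∑ j, (z j : ℝ) • b j) i) ⬝ᵥ
        Q.mulVec (fun i => (∑ j, (z j : ℝ) • b j) i)) :
    Q.PosDef := by
  let f : EuclideanSpace ℝ (Fin d) → ℝ := fun x => x.ofLp ⬝ᵥ Q *ᵥ x.ofLp
  have hlat : ∀ v ∈ span ℤ (Set.range b), 0 ≤ f v := by
    intro v hv
    obtain ⟨z, rfl⟩ := (mem_span_range_iff_exists_fun ℤ).mp hv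
    simpa only [f, ← Int.cast_smul_eq_zsmul ℝ] using hnonneg z
  have hf : ∀ x, 0 ≤ f x :=
    nonneg_of_nonneg_on_span_int b (by fun_prop)
      (fun t x => by simp only [f, WithLp.ofLp_smul, mulVec_smul, smul_dotProduct,
        dotProduct_smul, smul_eq_mul]; ring) hlat
  have hpsd : Q.PosSemidef :=
    .of_dotProduct_mulVec_nonneg (by rwa [IsHermitian, conjTranspose_eq_transpose_of_trivial])
      fun x => by simpa only [star_trivial] using hf (WithLp.toLp 2 x)
  exact hpsd.posDef_iff_isUnit.mpr hQunit
end
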